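/- Fix integers p ≥ 1 and m ≥ p+1 and real constants c ≥ d > 0. Then there exists a constant M > 0 (depending only on p, m, c, d) such that for all real numbers δ_1, …, δ_m with |δ_k| ≤ c for every k and |δ_k − δ_j| ≥ d for every k ≠ j, there exists λ = (λ_1,…,λ_m) ∈ ℝ^m with Σ_{k=1}^m λ_k = 1, Σ_{k=1}^m λ_k δ_k^i = 0 for every i ∈ {1,…,p}, and ℓ²-norm ‖λ‖_2 ≤ M. -/
import Mathlib


open Finset

/-- Theorem 3 of the paper: in the single-parameter case, if the implementable
parameters are bounded by `c` and pairwise separated by at least `d`, then order-`p`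
mitigation coefficients can be chosen with uniformly bounded ℓ²-norm. -/
theorem mitigation_coefficients_l2_bounded
    (p m : ℕ) (hp : 1 ≤ p) (hm : p + 1 ≤ m)
    (c d : ℝ) (hd : 0 < d) (hdc : d ≤ c) :
    ∃ M : ℝ, 0 < M ∧
      ∀ δ : Fin m → ℝ,
        (∀ k, |δ k| ≤ c) →
        (∀ k j, k ≠ j → d ≤ |δ k - δ j|) →
        ∃ lam : Fin m → ℝ,
          (∑ k, lam k = 1) ∧
          (∀ i : ℕ, 1 ≤ i → i ≤ p → ∑ k, lam k * δ k ^ i = 0) ∧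
          Real.sqrt (∑ k, lam k ^ 2) ≤ M := by
  classical
  have hm0 : (0:ℝ) < m := by
    have : 0 < m := lt_of_lt_of_le (Nat.succ_pos p) hm
    exact_mod_cast this
  have hc : 0 < c := lt_of_lt_of_le hd hdc
  refine ⟨Real.sqrt m * (c / d) ^ p, by positivity, ?_⟩
  intro δ hδc hδd
  have hinj : Function.Injective δ := by
    intro a b hab
    by_contra hne
    have h := hδd a b hne
    rw [hab, sub_self, abs_zero] at h
    exact absurd h (not_le.mpr hd)
  set s : Finset (Fin m) := Finset.univ.map (Fin.castLEEmb hm) with hs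
  have hcard : s.card = p + 1 := by simp [hs]
  have hinjs : Set.InjOn δ s := hinj.injOn
  set lam : Fin m → ℝ :=
    fun k => if k ∈ s then Polynomial.eval 0 (Lagrange.basis s δ k) else 0 with hlam
  have key : ∀ i : ℕ, i ≤ p →
      ∑ k, lam k * δ k ^ i = Polynomial.eval 0 ((Polynomial.X : Polynomial ℝ) ^ i) := by
    intro i hi
    have hdeg : ((Polynomial.X : Polynomial ℝ) ^ i).degree < s.card := by
      rw [Polynomial.degree_X_pow, hcard]
      exact_mod_cast Nat.lt_succ_of_le hi
    have hrep := Lagrange.eq_interpolate hinjs hdeg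
    calc ∑ k, lam k * δ k ^ i
        = ∑ k ∈ s, Polynomial.eval 0 (Lagrange.basis s δ k) * δ k ^ i := by
          rw [← Finset.sum_subset (Finset.subset_univ s)]
          · exact Finset.sum_congr rfl fun k hk => by simp [hlam, hk]
          · intro k _ hk; simp [hlam, hk]
      _ = Polynomial.eval 0 (Lagrange.interpolate s δ
            (fun k => ((Polynomial.X : Polynomial ℝ) ^ i).eval (δ k))) := by
          rw [Lagrange.interpolate_apply, Polynomial.eval_finset_sum]
          refine Finset.sum_congr rfl fun k hk => ?_
          simp [mul_comm]
      _ = Polynomial.eval 0 ((Polynomial.X : Polynomial ℝ) ^ i) := by rw [← hrep]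
  have hlam_abs : ∀ k, |lam k| ≤ (c / d) ^ p := by
    intro k
    by_cases hk : k ∈ s
    · rw [hlam]
      simp only [hk, if_true]
      have hb : Lagrange.basis s δ k
          = ∏ j ∈ s.erase k, Lagrange.basisDivisor (δ k) (δ j) := rfl
      rw [hb, Polynomial.eval_prod, Finset.abs_prod]
      have hfac : ∀ j ∈ s.erase k,
          |Polynomial.eval 0 (Lagrange.basisDivisor (δ k) (δ j))| ≤ c / d := by
        intro j hj
        have hjk : j ≠ k := (Finset.mem_erase.mp hj).1
        rw [Lagrange.basisDivisor]
        simp only [Polynomial.eval_mul, Polynomial.eval_C, Polynomial.eval_sub,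
          Polynomial.eval_X, zero_sub]
        rw [abs_mul, abs_inv, abs_neg]
        have h1 : d ≤ |δ k - δ j| := hδd k j (Ne.symm hjk)
        have h2 : |δ j| ≤ c := hδc j
        have h3 : |δ k - δ j|⁻¹ ≤ d⁻¹ := by
          apply inv_anti₀ hd h1
        calc |δ k - δ j|⁻¹ * |δ j| ≤ d⁻¹ * c :=
              mul_le_mul h3 h2 (abs_nonneg _) (by positivity)
          _ = c / d := by ring
      calc ∏ j ∈ s.erase k, |Polynomial.eval 0 (Lagrange.basisDivisor (δ k) (δ j))|
          ≤ ∏ j ∈ s.erase k, (c / d) :=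
            Finset.prod_le_prod (fun j _ => abs_nonneg _) hfac
        _ = (c / d) ^ (s.erase k).card := by rw [Finset.prod_const]
        _ = (c / d) ^ p := by rw [Finset.card_erase_of_mem hk, hcard, Nat.add_sub_cancel]
    · simp only [hlam, hk, if_false, abs_zero]
      positivity
  refine ⟨lam, ?_, ?_, ?_⟩
  · have h0 := key 0 (Nat.zero_le p)
    simpa using h0
  · intro i hi1 hip
    have h := key i hip
    rw [h]
    simp [zero_pow (by omega : i ≠ 0)]
  · have hsum : ∑ k, lam k ^ 2 ≤ (m : ℝ) * ((c / d) ^ p) ^ 2 := by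
      calc ∑ k, lam k ^ 2 ≤ ∑ _k : Fin m, ((c / d) ^ p) ^ 2 := by
            refine Finset.sum_le_sum fun k _ => ?_
            rw [← sq_abs]
            exact pow_le_pow_left₀ (abs_nonneg _) (hlam_abs k) 2
        _ = (m : ℝ) * ((c / d) ^ p) ^ 2 := by
            rw [Finset.sum_const, Finset.card_univ, Fintype.card_fin, nsmul_eq_mul]
    have h := Real.sqrt_le_sqrt hsum
    refine h.trans (le_of_eq ?_)
    rw [Real.sqrt_mul (le_of_lt hm0), Real.sqrt_sq (by positivity)]
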